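/- Let ι be a nonempty directed index set with filter l, let r : ι → (0,∞) satisfy r_λ → +∞, and for each λ let P_λ, P̂_λ be mutually absolutely continuous probability measures with entropy production σ_λ := log(dP_λ/dP̂_λ). Assume: (i) the laws of r_λ^{−1}σ_λ under P_λ and under P̂_λ satisfy the full large deviation principle with scale r_λ and convex, lower semicontinuous rate functions I and Î respectively (upper and lower LDP bounds for all Borel subsets of ℝ); (ii) the entropic pressure e(α) := sup_{s∈ℝ}(αs − I(−s)) satisfies e(α) = lim_λ r_λ^{−1} log ∫ e^{−ασ_λ} dP_λ for every α ∈ [0,1]. Then for every u ∈ ℝ the three Hoeffding error exponents coincide and equal −f(u), where f(u) := sup_{α∈(0,1]} α^{−1}(−(1−α)u − e(α)); here 𝔥̲(u) (resp. 𝔥̄(u)) is the infimum of liminf_λ r_λ^{−1} log P̂_λ(Γ_λ) (resp. of limsup_λ r_λ^{−1} log P̂_λ(Γ_λ)) over all families of measurable sets (Γ_λ)_λ with limsup_λ r_λ^{−1} log P_λ(Γ_λᶜ) < −u, and 𝔥(u) is the infimum of lim_λ r_λ^{−1} log P̂_λ(Γ_λ) over those such families for which this limit exists. -/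

import Mathlib

open MeasureTheory Filter
open scoped ENNReal

/-- The entropy production observable of a pair of measures:
`σ(x) = log (dP/dQ)(x)`. -/
noncomputable def entropyProduction {Ω : Type*} [MeasurableSpace Ω]
    (P Q : Measure Ω) (x : Ω) : ℝ :=
  Real.log ((P.rnDeriv Q x).toReal)

/-!
Achievability: for `α ∈ (0, 1]`, Chernoff bounds give for the threshold tests
`Γ_λ = {σ_λ ≥ s r_λ}` the exponents `P_λ(Γ_λᶜ) ≲ e^{r_λ (α s + e(α))}` and
`P̂_λ(Γ_λ) ≲ e^{r_λ (-(1 - α) s + e(α))}`, since `dP̂_λ = e^{-σ_λ} dP_λ`. Optimizing over `s`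
and `α` yields `-f(u)`; the LDP for `P̂_λ` turns the bound into a limit because, `Î` being convex,
`s ↦ inf_{[s, ∞)} Î` is right-continuous at all but at most one point.

Converse: if `P_λ(Γ_λᶜ) ≲ e^{-r_λ u'}` with `u' > u` and `I(t) < u'`, the event
`r_λ⁻¹ σ_λ < t + η` has `P_λ`-probability `≳ e^{-r_λ I(t)}`, mostly inside `Γ_λ`, and on it
`dP̂_λ ≥ e^{-r_λ (t + η)} dP_λ`. So every exponent is at least `-inf {t + I(t) | I(t) < u'}`, and
this infimum is at most `f(u)` by Lagrange duality for the convex problem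
`min {t + I(t) | I(t) ≤ u}`; the bound `I(t) ≥ -t` needed there is `e(1) = 0`, i.e.
`∫ e^{-σ_λ} dP_λ = 1`.
-/

open Set Topology

theorem nonpos_of_forall_add_nat_mul_lt {x y m : ℝ} (h : ∀ n : ℕ, x + n * y < m) : y ≤ 0 := by
  by_contra! hy
  obtain ⟨n, hn⟩ := exists_nat_gt ((m - x) / y)
  have := h n
  rw [div_lt_iff₀ hy] at hn
  linarith

theorem exists_nonneg_separation_of_disjoint_Iio_prod_Iio {C : Set (ℝ × ℝ)} (hC : Convex ℝ C)
    {p q : ℝ} (hdisj : Disjoint (Iio p ×ˢ Iio q) C) :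
    ∃ a b : ℝ, 0 ≤ a ∧ 0 ≤ b ∧ ∀ z ∈ C, a * p + b * q ≤ a * z.1 + b * z.2 ∧
      ∀ x < p, ∀ y < q, a * x + b * y < a * z.1 + b * z.2 := by
  obtain ⟨f, m, hfD, hfC⟩ := geometric_hahn_banach_open ((convex_Iio p).prod (convex_Iio q))
    (isOpen_Iio.prod isOpen_Iio) hC hdisj
  obtain ⟨a, b, hf⟩ : ∃ a b : ℝ, ∀ z : ℝ × ℝ, f z = a * z.1 + b * z.2 := by
    refine ⟨f (1, 0), f (0, 1), fun z => ?_⟩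
    have : z = z.1 • ((1, 0) : ℝ × ℝ) + z.2 • (0, 1) := by ext <;> simp
    rw [this, map_add, map_smul, map_smul, smul_eq_mul, smul_eq_mul]
    simp [mul_comm]
  have hmem : ((p, q) : ℝ × ℝ) ∈ closure (Iio p ×ˢ Iio q) := by
    rw [closure_prod_eq, closure_Iio, closure_Iio]
    simp
  have hcorner := map_mem_closure (t := Iio m) f.continuous hmem fun z hz => hfD z hz
  rw [closure_Iio, mem_Iic, hf] at hcorner
  simp only [hf] at hfD hfC
  have hfD' : ∀ x < p, ∀ y < q, a * x + b * y < m := fun x hx y hy => hfD (x, y) ⟨hx, hy⟩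
  refine ⟨a, b, ?_, ?_, fun z hz => ⟨hcorner.trans (hfC z hz), fun x hx y hy =>
    (hfD' x hx y hy).trans_le (hfC z hz)⟩⟩
  · refine neg_nonpos.1 <| nonpos_of_forall_add_nat_mul_lt (x := a * (p - 1) + b * (q - 1))
      (m := m) fun n => ?_
    have := hfD' (p - 1 - n) (by linarith [n.cast_nonneg (α := ℝ)]) (q - 1) (by linarith)
    linarith
  · refine neg_nonpos.1 <| nonpos_of_forall_add_nat_mul_lt (x := a * (p - 1) + b * (q - 1))
      (m := m) fun n => ?_
    have := hfD' (p - 1) (by linarith) (q - 1 - n) (by linarith [n.cast_nonneg (α := ℝ)])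
    linarith

theorem exists_affine_minorant_of_forall_le {s : Set ℝ} {J : ℝ → ℝ} (hJneg : ∀ t ∈ s, -t ≤ J t)
    {u u' c : ℝ} (huu' : u < u') (hJu' : ∀ t ∈ s, u' ≤ J t) :
    ∃ α ∈ Ioc (0 : ℝ) 1, ∀ t ∈ s, (1 - α) * u + α * (c - t) ≤ J t := by
  -- `J t ≥ (1 - α) u' + α (-t)`, and `α` is chosen so that `(1 - α) (u' - u) = α |c| ≥ α c`.
  have hden : 0 < |c| + (u' - u) := by positivity
  set α := (u' - u) / (|c| + (u' - u))
  have hα0 : 0 < α := div_pos (by linarith) hden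
  have hα1 : α ≤ 1 := (div_le_one hden).2 (by linarith [abs_nonneg c])
  have hαc : (1 - α) * (u' - u) = α * |c| := by
    simp only [α]
    field_simp
    ring
  refine ⟨α, ⟨hα0, hα1⟩, fun t ht => ?_⟩
  nlinarith [mul_le_mul_of_nonneg_left (hJu' t ht) (sub_nonneg.2 hα1),
    mul_le_mul_of_nonneg_left (hJneg t ht) hα0.le, le_abs_self c]

/-- Strong Lagrange duality for `min {t + J t | J t ≤ u}`: the multiplier comes from separating
`{(x, y) | ∃ t ∈ s, J t ≤ x ∧ t + J t ≤ y}` from the open quadrant below `(u', c)`. -/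
theorem ConvexOn.exists_lagrange_multiplier {s : Set ℝ} {J : ℝ → ℝ} (hJ : ConvexOn ℝ s J)
    (hJneg : ∀ t ∈ s, -t ≤ J t) {u u' c : ℝ} (huu' : u < u')
    (H : ∀ t ∈ s, J t < u' → c ≤ t + J t) :
    ∃ α ∈ Ioc (0 : ℝ) 1, ∀ t ∈ s, (1 - α) * u + α * (c - t) ≤ J t := by
  by_cases hs : ∀ t ∈ s, u' ≤ J t
  · exact exists_affine_minorant_of_forall_le hJneg huu' hs
  push Not at hs
  obtain ⟨t₀, ht₀, hJt₀⟩ := hs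
  set C : Set (ℝ × ℝ) := {z | ∃ t ∈ s, J t ≤ z.1 ∧ t + J t ≤ z.2}
  have hC : Convex ℝ C := by
    rintro z₁ ⟨t₁, ht₁, hx₁, hy₁⟩ z₂ ⟨t₂, ht₂, hx₂, hy₂⟩ p q hp hq hpq
    have hJpq := hJ.2 ht₁ ht₂ hp hq hpq
    simp only [smul_eq_mul] at hJpq
    refine ⟨p * t₁ + q * t₂, hJ.1 ht₁ ht₂ hp hq hpq, ?_, ?_⟩ <;>
      simp only [Prod.fst_add, Prod.snd_add, Prod.smul_fst, Prod.smul_snd, smul_eq_mul] <;>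
      nlinarith [mul_le_mul_of_nonneg_left hx₁ hp, mul_le_mul_of_nonneg_left hx₂ hq,
        mul_le_mul_of_nonneg_left hy₁ hp, mul_le_mul_of_nonneg_left hy₂ hq]
  have hdisj : Disjoint (Iio u' ×ˢ Iio c) C := by
    refine Set.disjoint_left.2 fun z ⟨hx, hy⟩ ⟨t, ht, hxt, hyt⟩ => ?_
    exact (H t ht (hxt.trans_lt hx)).trans hyt |>.not_gt hy
  obtain ⟨a, b, ha, hb, hab⟩ := exists_nonneg_separation_of_disjoint_Iio_prod_Iio hC hdisj
  have hbpos : 0 < b := by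
    refine hb.lt_of_ne fun hb0 => ?_
    have := (hab (J t₀, t₀ + J t₀) ⟨t₀, ht₀, le_rfl, le_rfl⟩).2 (J t₀) hJt₀ (c - 1) (by linarith)
    simp [← hb0] at this
  have hapb : 0 < a + b := by linarith
  refine ⟨b / (a + b), ⟨div_pos hbpos hapb, (div_le_one hapb).2 (by linarith)⟩, fun t ht => ?_⟩
  have : (1 - b / (a + b)) * u + b / (a + b) * (c - t) = (a * u + b * (c - t)) / (a + b) := by
    field_simp
    ring
  rw [this, div_le_iff₀ hapb]
  nlinarith [(hab (J t, t + J t) ⟨t, ht, le_rfl, le_rfl⟩).1, mul_le_mul_of_nonneg_left huu'.le ha]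

theorem convexOn_toReal_setOf_ne_top {I : ℝ → ℝ≥0∞}
    (hI : ∀ x y p q : ℝ, 0 ≤ p → 0 ≤ q → p + q = 1 →
      I (p * x + q * y) ≤ ENNReal.ofReal p * I x + ENNReal.ofReal q * I y) :
    ConvexOn ℝ {t | I t ≠ ⊤} fun t => (I t).toReal := by
  have hsum : ∀ {x y p : ℝ}, I x ≠ ⊤ → I y ≠ ⊤ →
      ENNReal.ofReal p * I x + ENNReal.ofReal (1 - p) * I y ≠ ⊤ := fun hx hy =>
    ENNReal.add_ne_top.2 ⟨ENNReal.mul_ne_top ENNReal.ofReal_ne_top hx,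
      ENNReal.mul_ne_top ENNReal.ofReal_ne_top hy⟩
  refine ⟨fun x hx y hy p q hp hq hpq => ?_, fun x hx y hy p q hp hq hpq => ?_⟩
  all_goals
    obtain rfl : q = 1 - p := by linarith
    have hle := hI x y p (1 - p) hp hq (by ring)
  · exact ne_top_of_le_ne_top (hsum hx hy) hle
  · have := ENNReal.toReal_mono (hsum hx hy) hle
    rwa [ENNReal.toReal_add (ENNReal.mul_ne_top ENNReal.ofReal_ne_top hx)
      (ENNReal.mul_ne_top ENNReal.ofReal_ne_top hy), ENNReal.toReal_mul, ENNReal.toReal_mul,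
      ENNReal.toReal_ofReal hp, ENNReal.toReal_ofReal hq] at this

theorem ConvexOn.exists_lt_of_lt_left {s : Set ℝ} {J : ℝ → ℝ} (hJ : ConvexOn ℝ s J) {x y m : ℝ}
    (hx : x ∈ s) (hy : y ∈ s) (hxy : x < y) (hm : J x < m) : ∃ t ∈ Ioo x y, t ∈ s ∧ J t < m := by
  have hcont : Continuous fun θ : ℝ => (1 - θ) * J x + θ * J y := by fun_prop
  have hlim : Tendsto (fun θ : ℝ => (1 - θ) * J x + θ * J y) (𝓝[>] 0) (𝓝 (J x)) := by
    simpa using (hcont.tendsto 0).mono_left nhdsWithin_le_nhds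
  obtain ⟨θ, hθm, hθ0, hθ1⟩ := ((hlim.eventually (gt_mem_nhds hm)).and
    (Ioo_mem_nhdsGT one_pos)).exists
  have hθ := hJ.2 hx hy (by linarith : 0 ≤ 1 - θ) hθ0.le (by ring)
  simp only [smul_eq_mul] at hθ
  refine ⟨(1 - θ) * x + θ * y, ⟨by nlinarith, by nlinarith⟩,
    hJ.1 hx hy (by linarith) hθ0.le (by ring), hθ.trans_lt hθm⟩

theorem subsingleton_setOf_lt_biInf_Ioi {I : ℝ → ℝ≥0∞}
    (hI : ConvexOn ℝ {t | I t ≠ ⊤} fun t => (I t).toReal) :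
    {s | (I s : EReal) < ⨅ t ∈ Ioi s, (I t : EReal)}.Subsingleton := by
  intro x (hx : (I x : EReal) < _) y (hy : (I y : EReal) < _)
  by_contra hne
  wlog hxy : x < y generalizing x y
  · exact this hy hx (Ne.symm hne) (lt_of_le_of_ne (not_lt.1 hxy) (Ne.symm hne))
  have hy' : I y ≠ ⊤ := fun h => by simp [h] at hy
  have hx' : I x ≠ ⊤ := fun h => by
    simpa [h] using hx.trans_le (biInf_le _ hxy)
  obtain ⟨m, hxm, hm⟩ := EReal.exists_between_coe_real hx
  rw [← EReal.coe_ennreal_toReal hx', EReal.coe_lt_coe_iff] at hxm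
  obtain ⟨t, ⟨hxt, -⟩, ht, htm⟩ := hI.exists_lt_of_lt_left hx' hy' hxy hxm
  have hmt := hm.trans_le (biInf_le _ hxt)
  rw [← EReal.coe_ennreal_toReal ht, EReal.coe_lt_coe_iff] at hmt
  exact htm.not_gt hmt

theorem biInf_Ici_eq_biInf_Ioi {α β : Type*} [LinearOrder β] [CompleteLinearOrder α] {g : β → α}
    {s : β} (h : ¬ g s < ⨅ t ∈ Ioi s, g t) : ⨅ t ∈ Ici s, g t = ⨅ t ∈ Ioi s, g t := by
  rw [← Ioi_insert, iInf_insert, inf_eq_right.2 (not_lt.1 h)]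

noncomputable def entropicPressure (I : ℝ → ℝ≥0∞) (α : ℝ) : EReal :=
  ⨆ s : ℝ, ((α * s : ℝ) : EReal) - (I (-s) : EReal)

/-- The function `f` of the Hoeffding bound; the Hoeffding exponents are `-hoeffdingRate e u`. -/
noncomputable def hoeffdingRate (e : ℝ → EReal) (u : ℝ) : EReal :=
  ⨆ α ∈ Ioc (0 : ℝ) 1, ((α⁻¹ : ℝ) : EReal) * (((-(1 - α) * u : ℝ) : EReal) - e α)

theorem neg_le_of_entropicPressure_one_nonpos {I : ℝ → ℝ≥0∞} (h : entropicPressure I 1 ≤ 0)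
    (t : ℝ) : ((-t : ℝ) : EReal) ≤ I t := by
  by_cases ht : I t = ⊤
  · simp [ht]
  have := (le_iSup (fun s : ℝ => ((1 * s : ℝ) : EReal) - (I (-s) : EReal)) (-t)).trans h
  rw [neg_neg, ← EReal.coe_ennreal_toReal ht, ← EReal.coe_sub] at this
  rw [← EReal.coe_ennreal_toReal ht, EReal.coe_le_coe_iff]
  have := EReal.coe_nonpos.1 this
  linarith

theorem entropicPressure_nonpos {I : ℝ → ℝ≥0∞} (hI : ∀ t, ((-t : ℝ) : EReal) ≤ I t) {α : ℝ}
    (hα : α ∈ Icc (0 : ℝ) 1) : entropicPressure I α ≤ 0 := by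
  refine iSup_le fun s => EReal.sub_nonpos.2 ?_
  rcases le_total s 0 with hs | hs
  · calc ((α * s : ℝ) : EReal) ≤ 0 := by exact_mod_cast mul_nonpos_of_nonneg_of_nonpos hα.1 hs
      _ ≤ I (-s) := EReal.coe_ennreal_nonneg _
  · calc ((α * s : ℝ) : EReal) ≤ ((-(-s) : ℝ) : EReal) := by
          rw [neg_neg]; exact_mod_cast mul_le_of_le_one_left hs hα.2
      _ ≤ I (-s) := hI (-s)

theorem entropicPressure_ne_bot {I : ℝ → ℝ≥0∞} {β : ℝ} (h : entropicPressure I β ≠ ⊥) (α : ℝ) :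
    entropicPressure I α ≠ ⊥ := by
  obtain ⟨s, hs⟩ : ∃ s : ℝ, ((β * s : ℝ) : EReal) - I (-s) ≠ ⊥ := by
    by_contra! h'
    exact h (iSup_eq_bot.2 h')
  have hIs : I (-s) ≠ ⊤ := fun h => hs (by simp [h])
  refine ne_bot_of_le_ne_bot ?_ (le_iSup (fun s : ℝ => ((α * s : ℝ) : EReal) - I (-s)) s)
  rw [← EReal.coe_ennreal_toReal hIs, ← EReal.coe_sub]
  exact EReal.coe_ne_bot _

theorem le_hoeffdingRate {e : ℝ → EReal} {u c α : ℝ} (hα : α ∈ Ioc (0 : ℝ) 1)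
    (h : e α ≤ ((-(1 - α) * u - α * c : ℝ) : EReal)) : (c : EReal) ≤ hoeffdingRate e u := by
  refine le_trans ?_ (le_iSup₂ (f := fun α (_ : α ∈ Ioc (0 : ℝ) 1) =>
    ((α⁻¹ : ℝ) : EReal) * (((-(1 - α) * u : ℝ) : EReal) - e α)) α hα)
  calc (c : EReal)
      = ((α⁻¹ : ℝ) : EReal) *
          (((-(1 - α) * u : ℝ) : EReal) - ((-(1 - α) * u - α * c : ℝ) : EReal)) := by
        rw [← EReal.coe_sub, ← EReal.coe_mul, EReal.coe_eq_coe_iff]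
        field_simp [hα.1.ne']
        ring
    _ ≤ _ := mul_le_mul_of_nonneg_left (EReal.sub_le_sub le_rfl h)
        (by exact_mod_cast (inv_pos.2 hα.1).le)

theorem iInf_add_le_hoeffdingRate {I : ℝ → ℝ≥0∞}
    (hI : ConvexOn ℝ {t | I t ≠ ⊤} fun t => (I t).toReal)
    (hIneg : ∀ t, ((-t : ℝ) : EReal) ≤ I t) {u u' : ℝ} (huu' : u < u') :
    ⨅ t, ⨅ (_ : (I t : EReal) < u'), ((t : EReal) + I t) ≤
      hoeffdingRate (entropicPressure I) u := by
  refine EReal.ge_of_forall_gt_iff_ge.1 fun c hc => ?_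
  have H : ∀ t ∈ {t | I t ≠ ⊤}, (I t).toReal < u' → c ≤ t + (I t).toReal := by
    intro t ht htu
    have hlt : (I t : EReal) < u' := by rw [← EReal.coe_ennreal_toReal ht]; exact_mod_cast htu
    have := hc.trans_le (iInf₂_le t hlt)
    rw [← EReal.coe_ennreal_toReal ht] at this
    exact_mod_cast this.le
  have hIneg' : ∀ t ∈ {t | I t ≠ ⊤}, -t ≤ (I t).toReal := fun t ht => by
    have := hIneg t
    rwa [← EReal.coe_ennreal_toReal ht, EReal.coe_le_coe_iff] at this
  obtain ⟨α, hα, hline⟩ := hI.exists_lagrange_multiplier hIneg' huu' H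
  refine le_hoeffdingRate hα (iSup_le fun s => ?_)
  by_cases hs : I (-s) = ⊤
  · simp [hs]
  · rw [← EReal.coe_ennreal_toReal hs, ← EReal.coe_sub, EReal.coe_le_coe_iff]
    have := hline (-s) hs
    linarith

theorem ofReal_exp_le_ofReal_exp_mul {a b c : ℝ} (h : a ≤ b + c) :
    ENNReal.ofReal (Real.exp a) ≤ ENNReal.ofReal (Real.exp b) * ENNReal.ofReal (Real.exp c) := by
  rw [← ENNReal.ofReal_mul (Real.exp_pos b).le, ← Real.exp_add]
  exact ENNReal.ofReal_le_ofReal (Real.exp_le_exp.2 h)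

section EntropyProduction

variable {Ω : Type*} [MeasurableSpace Ω]

theorem setLIntegral_le_mul_lintegral {μ : Measure Ω} {s : Set Ω} {f g : Ω → ℝ≥0∞} {K : ℝ≥0∞}
    (hg : Measurable g) (h : ∀ x ∈ s, f x ≤ K * g x) :
    ∫⁻ x in s, f x ∂μ ≤ K * ∫⁻ x, g x ∂μ :=
  calc ∫⁻ x in s, f x ∂μ ≤ ∫⁻ x in s, K * g x ∂μ := setLIntegral_mono (hg.const_mul K) h
    _ = K * ∫⁻ x in s, g x ∂μ := lintegral_const_mul K hg
    _ ≤ K * ∫⁻ x, g x ∂μ := by gcongr; exact Measure.restrict_le_self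

theorem measure_setOf_lt_le_exp_mul_lintegral {μ : Measure Ω} {g : Ω → ℝ} (hg : Measurable g)
    {α : ℝ} (hα : 0 ≤ α) (c : ℝ) :
    μ {x | g x < c} ≤
      ENNReal.ofReal (Real.exp (α * c)) * ∫⁻ x, ENNReal.ofReal (Real.exp (-α * g x)) ∂μ := by
  rw [← setLIntegral_one]
  refine setLIntegral_le_mul_lintegral (by fun_prop) fun x (hx : g x < c) => ?_
  rw [← ENNReal.ofReal_one, ← Real.exp_zero]
  exact ofReal_exp_le_ofReal_exp_mul (by nlinarith)

variable {P Q : Measure Ω}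

theorem measurable_entropyProduction (P Q : Measure Ω) : Measurable (entropyProduction P Q) :=
  Real.measurable_log.comp (Measure.measurable_rnDeriv P Q).ennreal_toReal

variable [SigmaFinite P] [SigmaFinite Q]

theorem rnDeriv_ae_eq_exp_neg_entropyProduction (hPQ : P ≪ Q) :
    Q.rnDeriv P =ᵐ[P] fun x => ENNReal.ofReal (Real.exp (-entropyProduction P Q x)) := by
  filter_upwards [Measure.inv_rnDeriv hPQ, Measure.rnDeriv_pos hPQ,
    hPQ.ae_le (Measure.rnDeriv_lt_top P Q)] with x hinv hpos hlt
  have hreal : 0 < (P.rnDeriv Q x).toReal := ENNReal.toReal_pos hpos.ne' hlt.ne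
  rw [← hinv, Pi.inv_apply, entropyProduction, Real.exp_neg, Real.exp_log hreal,
    ENNReal.ofReal_inv_of_pos hreal, ENNReal.ofReal_toReal hlt.ne]

theorem setLIntegral_exp_neg_entropyProduction (hPQ : P ≪ Q) (hQP : Q ≪ P) (A : Set Ω) :
    ∫⁻ x in A, ENNReal.ofReal (Real.exp (-entropyProduction P Q x)) ∂P = Q A := by
  rw [← Measure.setLIntegral_rnDeriv hQP A]
  exact lintegral_congr_ae <|
    (ae_restrict_of_ae (rnDeriv_ae_eq_exp_neg_entropyProduction hPQ)).mono fun x hx => hx.symm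

theorem lintegral_exp_neg_entropyProduction (hPQ : P ≪ Q) (hQP : Q ≪ P) :
    ∫⁻ x, ENNReal.ofReal (Real.exp (-entropyProduction P Q x)) ∂P = Q univ := by
  rw [← setLIntegral_univ, setLIntegral_exp_neg_entropyProduction hPQ hQP]

theorem ofReal_exp_neg_mul_le_measure (hPQ : P ≪ Q) (hQP : Q ≪ P) {A : Set Ω} {β : ℝ}
    (h : ∀ x ∈ A, entropyProduction P Q x ≤ β) : ENNReal.ofReal (Real.exp (-β)) * P A ≤ Q A := by
  rw [← setLIntegral_exp_neg_entropyProduction hPQ hQP, ← setLIntegral_const]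
  have := measurable_entropyProduction P Q
  exact setLIntegral_mono (by fun_prop) fun x hx =>
    ENNReal.ofReal_le_ofReal (Real.exp_le_exp.2 (neg_le_neg (h x hx)))

theorem ofReal_exp_le_measure_of_entropyProduction_le (hPQ : P ≪ Q) (hQP : Q ≪ P)
    {A B : Set Ω} {β w v : ℝ} (hσ : ∀ x ∈ B, entropyProduction P Q x ≤ β)
    (hB : ENNReal.ofReal (Real.exp (-w)) ≤ P B) (hA : P Aᶜ ≤ ENNReal.ofReal (Real.exp (-v)))
    (hwv : w + Real.log 2 ≤ v) :
    ENNReal.ofReal (Real.exp (-(β + w) - Real.log 2)) ≤ Q A := by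
  have hAB : ENNReal.ofReal (Real.exp (-w - Real.log 2)) ≤ P (A ∩ B) :=
    calc ENNReal.ofReal (Real.exp (-w - Real.log 2))
        ≤ ENNReal.ofReal (Real.exp (-w)) - ENNReal.ofReal (Real.exp (-v)) := by
          rw [← ENNReal.ofReal_sub _ (Real.exp_pos _).le]
          refine ENNReal.ofReal_le_ofReal ?_
          have hhalf : Real.exp (-w - Real.log 2) = Real.exp (-w) / 2 := by
            rw [Real.exp_sub, Real.exp_log two_pos]
          have : Real.exp (-v) ≤ Real.exp (-w - Real.log 2) := Real.exp_le_exp.2 (by linarith)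
          linarith
      _ ≤ P B - P Aᶜ := tsub_le_tsub hB hA
      _ ≤ P (A ∩ B) := by
          rw [tsub_le_iff_right]
          refine (measure_mono fun x hx => ?_).trans (measure_union_le (A ∩ B) Aᶜ)
          by_cases hxA : x ∈ A
          exacts [Or.inl ⟨hxA, hx⟩, Or.inr hxA]
  calc ENNReal.ofReal (Real.exp (-(β + w) - Real.log 2))
      ≤ ENNReal.ofReal (Real.exp (-β)) * ENNReal.ofReal (Real.exp (-w - Real.log 2)) :=
        ofReal_exp_le_ofReal_exp_mul (by linarith)
    _ ≤ ENNReal.ofReal (Real.exp (-β)) * P (A ∩ B) := by gcongr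
    _ ≤ Q (A ∩ B) := ofReal_exp_neg_mul_le_measure hPQ hQP fun x hx => hσ x hx.2
    _ ≤ Q A := measure_mono inter_subset_left

theorem measure_setOf_le_entropyProduction_le_exp_mul_lintegral (hPQ : P ≪ Q) (hQP : Q ≪ P) {α : ℝ} (hα : α ≤ 1)
    (c : ℝ) :
    Q {x | c ≤ entropyProduction P Q x} ≤ ENNReal.ofReal (Real.exp (-(1 - α) * c)) *
      ∫⁻ x, ENNReal.ofReal (Real.exp (-α * entropyProduction P Q x)) ∂P := by
  rw [← setLIntegral_exp_neg_entropyProduction hPQ hQP]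
  have := measurable_entropyProduction P Q
  refine setLIntegral_le_mul_lintegral (by fun_prop) fun x (hx : c ≤ _) =>
    ofReal_exp_le_ofReal_exp_mul ?_
  nlinarith [mul_le_mul_of_nonneg_left hx (sub_nonneg.2 hα)]

end EntropyProduction

theorem ENNReal.log_le_coe_iff {X : ℝ≥0∞} {x : ℝ} :
    ENNReal.log X ≤ x ↔ X ≤ ENNReal.ofReal (Real.exp x) := by
  rw [← ENNReal.log_le_log_iff, ENNReal.log_ofReal_of_pos (Real.exp_pos x), Real.log_exp]

theorem ENNReal.coe_le_log_iff {X : ℝ≥0∞} {x : ℝ} :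
    (x : EReal) ≤ ENNReal.log X ↔ ENNReal.ofReal (Real.exp x) ≤ X := by
  rw [← ENNReal.log_le_log_iff, ENNReal.log_ofReal_of_pos (Real.exp_pos x), Real.log_exp]

section LogRate

variable {ρ : ℝ} {X : ℝ≥0∞} {c : ℝ}

theorem EReal.inv_mul_log_le_iff (hρ : 0 < ρ) :
    (ρ : EReal)⁻¹ * ENNReal.log X ≤ c ↔ X ≤ ENNReal.ofReal (Real.exp (c * ρ)) := by
  rw [← EReal.div_eq_inv_mul, EReal.div_le_iff_le_mul (by exact_mod_cast hρ) (EReal.coe_ne_top ρ),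
    ← EReal.coe_mul, mul_comm ρ, ENNReal.log_le_coe_iff]

theorem EReal.le_inv_mul_log_iff (hρ : 0 < ρ) :
    (c : EReal) ≤ (ρ : EReal)⁻¹ * ENNReal.log X ↔ ENNReal.ofReal (Real.exp (c * ρ)) ≤ X := by
  rw [← EReal.div_eq_inv_mul, EReal.le_div_iff_mul_le (by exact_mod_cast hρ) (EReal.coe_ne_top ρ),
    ← EReal.coe_mul, ENNReal.coe_le_log_iff]

theorem EReal.lt_inv_mul_log_iff (hρ : 0 < ρ) :
    (c : EReal) < (ρ : EReal)⁻¹ * ENNReal.log X ↔ ENNReal.ofReal (Real.exp (c * ρ)) < X := by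
  simpa only [not_le] using (EReal.inv_mul_log_le_iff hρ).not

theorem EReal.inv_mul_log_lt_iff (hρ : 0 < ρ) :
    (ρ : EReal)⁻¹ * ENNReal.log X < c ↔ X < ENNReal.ofReal (Real.exp (c * ρ)) := by
  simpa only [not_le] using (EReal.le_inv_mul_log_iff hρ).not

theorem EReal.inv_mul_log_ofReal_exp_mul (hρ : 0 < ρ) (a : ℝ) (Y : ℝ≥0∞) :
    (ρ : EReal)⁻¹ * ENNReal.log (ENNReal.ofReal (Real.exp (a * ρ)) * Y) =
      a + (ρ : EReal)⁻¹ * ENNReal.log Y := by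
  rw [ENNReal.log_mul_add, ENNReal.log_ofReal_of_pos (Real.exp_pos _), Real.log_exp,
    EReal.left_distrib_of_nonneg_of_ne_top (EReal.inv_nonneg_of_nonneg (by exact_mod_cast hρ.le))
      (EReal.inv_lt_top _).ne]
  congr 1
  rw [← EReal.div_eq_inv_mul, ← EReal.coe_div, mul_div_cancel_right₀ a hρ.ne']

variable {ι : Type*} {l : Filter ι} {r : ι → ℝ}

noncomputable def logRate (r : ι → ℝ) (Z : ι → ℝ≥0∞) (i : ι) : EReal :=
  ((r i)⁻¹ : EReal) * ENNReal.log (Z i)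

theorem limsup_logRate_le [l.NeBot] (hr : ∀ i, 0 < r i) {W Z : ι → ℝ≥0∞} {a : ℝ} {E : EReal}
    (hW : Tendsto (logRate r W) l (𝓝 E))
    (hZW : ∀ i, Z i ≤ ENNReal.ofReal (Real.exp (a * r i)) * W i) :
    limsup (logRate r Z) l ≤ a + E := by
  have hlim : Tendsto (fun i => (a : EReal) + logRate r W i) l (𝓝 (a + E)) :=
    (EReal.continuousAt_add (Or.inl (EReal.coe_ne_top a))
      (Or.inl (EReal.coe_ne_bot a))).tendsto.comp (tendsto_const_nhds.prodMk_nhds hW)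
  refine (limsup_le_limsup (Eventually.of_forall fun i => ?_)).trans_eq hlim.limsup_eq
  rw [logRate, logRate, ← EReal.inv_mul_log_ofReal_exp_mul (hr i)]
  exact mul_le_mul_of_nonneg_left (ENNReal.log_le_log (hZW i))
    (EReal.inv_nonneg_of_nonneg (by exact_mod_cast (hr i).le))

theorem le_liminf_logRate [l.NeBot] (hrpos : ∀ i, 0 < r i) (hr : Tendsto r l atTop)
    {Z : ι → ℝ≥0∞} {a b : ℝ} (h : ∀ᶠ i in l, ENNReal.ofReal (Real.exp (a * r i + b)) ≤ Z i) :
    (a : EReal) ≤ liminf (logRate r Z) l := by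
  have hlim : Tendsto (fun i => ((a + b / r i : ℝ) : EReal)) l (𝓝 a) := by
    rw [EReal.tendsto_coe]
    simpa using (hr.const_div_atTop b).const_add a
  calc (a : EReal) = liminf (fun i => ((a + b / r i : ℝ) : EReal)) l := hlim.liminf_eq.symm
    _ ≤ liminf (logRate r Z) l := liminf_le_liminf <| h.mono fun i hi => by
        rw [logRate, EReal.le_inv_mul_log_iff (hrpos i), add_mul, div_mul_cancel₀ b (hrpos i).ne']
        exact hi

end LogRate

section Tests

variable {ι : Type*} {l : Filter ι} {r : ι → ℝ} {Ω : ι → Type*} [∀ i, MeasurableSpace (Ω i)]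
  {P Q : ∀ i, Measure (Ω i)}

theorem neg_add_le_liminf_logRate [l.NeBot] [∀ i, SigmaFinite (P i)] [∀ i, SigmaFinite (Q i)]
    (hrpos : ∀ i, 0 < r i) (hr : Tendsto r l atTop) (hPQ : ∀ i, P i ≪ Q i)
    (hQP : ∀ i, Q i ≪ P i) {I : ℝ → ℝ≥0∞}
    (hLDP : ∀ S : Set ℝ, IsOpen S → -(⨅ s ∈ S, (I s : EReal)) ≤
      liminf (logRate r fun i => P i {x | (r i)⁻¹ * entropyProduction (P i) (Q i) x ∈ S}) l)
    {Γ : ∀ i, Set (Ω i)} {v : ℝ} (hΓ : limsup (logRate r fun i => P i (Γ i)ᶜ) l < -(v : EReal))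
    {t : ℝ} (ht : (I t : EReal) < v) :
    -((t : EReal) + I t) ≤ liminf (logRate r fun i => Q i (Γ i)) l := by
  have hIt : I t ≠ ⊤ := fun h => by simp [h] at ht
  set J := (I t).toReal
  have hJv : J < v := by rwa [← EReal.coe_ennreal_toReal hIt, EReal.coe_lt_coe_iff] at ht
  have key : ∀ η > 0, J + η < v →
      ((-(t + η + (J + η)) : ℝ) : EReal) ≤ liminf (logRate r fun i => Q i (Γ i)) l := by
    intro η hη hηv
    set B := fun i => {x | (r i)⁻¹ * entropyProduction (P i) (Q i) x ∈ Iio (t + η)}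
    have hB : ((-(J + η) : ℝ) : EReal) < liminf (logRate r fun i => P i (B i)) l := by
      refine lt_of_lt_of_le ?_ (hLDP _ isOpen_Iio)
      rw [EReal.coe_neg, EReal.neg_lt_neg_iff]
      calc ⨅ s ∈ Iio (t + η), (I s : EReal) ≤ I t := biInf_le _ (by simpa using hη)
        _ < ((J + η : ℝ) : EReal) := by
          rw [← EReal.coe_ennreal_toReal hIt, EReal.coe_lt_coe_iff]; linarith
    have hR : ∀ᶠ i in l, Real.log 2 ≤ (v - (J + η)) * r i :=
      (hr.const_mul_atTop (by linarith)).eventually (eventually_ge_atTop _)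
    refine le_liminf_logRate hrpos hr (b := -Real.log 2) ?_
    filter_upwards [eventually_lt_of_lt_liminf hB, eventually_lt_of_limsup_lt hΓ, hR]
      with i hBi hΓi hRi
    rw [logRate, EReal.lt_inv_mul_log_iff (hrpos i), neg_mul] at hBi
    rw [logRate, ← EReal.coe_neg, EReal.inv_mul_log_lt_iff (hrpos i), neg_mul] at hΓi
    have hσ : ∀ x ∈ B i, entropyProduction (P i) (Q i) x ≤ (t + η) * r i := fun x hx => by
      have hx : (r i)⁻¹ * entropyProduction (P i) (Q i) x < t + η := hx
      rw [inv_mul_lt_iff₀ (hrpos i), mul_comm] at hx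
      exact hx.le
    convert ofReal_exp_le_measure_of_entropyProduction_le (hPQ i) (hQP i) hσ hBi.le hΓi.le
      (by linarith) using 3
    ring
  have hlim : Tendsto (fun η : ℝ => ((-(t + η + (J + η)) : ℝ) : EReal)) (𝓝[>] 0)
      (𝓝 ((-(t + J) : ℝ) : EReal)) := by
    refine EReal.tendsto_coe.2 (tendsto_nhdsWithin_of_tendsto_nhds ?_)
    have : Continuous fun η : ℝ => -(t + η + (J + η)) := by fun_prop
    simpa using this.tendsto 0
  rw [← EReal.coe_ennreal_toReal hIt, ← EReal.coe_add, ← EReal.coe_neg]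
  refine le_of_tendsto hlim ?_
  filter_upwards [Ioo_mem_nhdsGT (by linarith : (0 : ℝ) < v - J)] with η hη
  exact key η hη.1 (by linarith [hη.2])

theorem neg_hoeffdingRate_le_liminf_logRate [l.NeBot] [∀ i, SigmaFinite (P i)]
    [∀ i, SigmaFinite (Q i)] (hrpos : ∀ i, 0 < r i) (hr : Tendsto r l atTop)
    (hPQ : ∀ i, P i ≪ Q i) (hQP : ∀ i, Q i ≪ P i) {I : ℝ → ℝ≥0∞}
    (hI : ConvexOn ℝ {t | I t ≠ ⊤} fun t => (I t).toReal)
    (hIneg : ∀ t, ((-t : ℝ) : EReal) ≤ I t)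
    (hLDP : ∀ S : Set ℝ, IsOpen S → -(⨅ s ∈ S, (I s : EReal)) ≤
      liminf (logRate r fun i => P i {x | (r i)⁻¹ * entropyProduction (P i) (Q i) x ∈ S}) l)
    {Γ : ∀ i, Set (Ω i)} {u : ℝ} (hΓ : limsup (logRate r fun i => P i (Γ i)ᶜ) l < -(u : EReal)) :
    -hoeffdingRate (entropicPressure I) u ≤ liminf (logRate r fun i => Q i (Γ i)) l := by
  obtain ⟨z, hz, hzu⟩ := EReal.exists_between_coe_real hΓ
  have hΓ' : limsup (logRate r fun i => P i (Γ i)ᶜ) l < -((-z : ℝ) : EReal) := by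
    rwa [EReal.coe_neg, neg_neg]
  have huz : u < -z := by
    rw [← EReal.coe_neg, EReal.coe_lt_coe_iff] at hzu
    linarith
  calc -hoeffdingRate (entropicPressure I) u
      ≤ -⨅ t, ⨅ (_ : (I t : EReal) < (-z : ℝ)), ((t : EReal) + I t) :=
        EReal.neg_le_neg_iff.2 (iInf_add_le_hoeffdingRate hI hIneg huz)
    _ ≤ liminf (logRate r fun i => Q i (Γ i)) l := by
        rw [EReal.neg_le]
        exact le_iInf₂ fun t ht =>
          EReal.neg_le.1 (neg_add_le_liminf_logRate hrpos hr hPQ hQP hLDP hΓ' ht)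

theorem limsup_logRate_entropyProduction_lt_le [l.NeBot] (hrpos : ∀ i, 0 < r i) {α : ℝ}
    (hα : 0 ≤ α) {E : EReal}
    (hE : Tendsto (logRate r fun i => ∫⁻ x, ENNReal.ofReal
      (Real.exp (-α * entropyProduction (P i) (Q i) x)) ∂P i) l (𝓝 E)) (s : ℝ) :
    limsup (logRate r fun i => P i {x | (r i)⁻¹ * entropyProduction (P i) (Q i) x ∈ Ici s}ᶜ) l
      ≤ ((α * s : ℝ) : EReal) + E := by
  refine limsup_logRate_le hrpos hE fun i => ?_
  have hset : {x | (r i)⁻¹ * entropyProduction (P i) (Q i) x ∈ Ici s}ᶜ =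
      {x | entropyProduction (P i) (Q i) x < s * r i} := by
    ext x
    show ¬s ≤ _ ↔ entropyProduction (P i) (Q i) x < s * r i
    rw [not_le, inv_mul_lt_iff₀ (hrpos i), mul_comm]
  rw [hset, mul_assoc]
  exact measure_setOf_lt_le_exp_mul_lintegral (measurable_entropyProduction _ _) hα _

theorem limsup_logRate_le_entropyProduction_le [l.NeBot] [∀ i, SigmaFinite (P i)]
    [∀ i, SigmaFinite (Q i)] (hrpos : ∀ i, 0 < r i) (hPQ : ∀ i, P i ≪ Q i)
    (hQP : ∀ i, Q i ≪ P i) {α : ℝ} (hα : α ≤ 1) {E : EReal}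
    (hE : Tendsto (logRate r fun i => ∫⁻ x, ENNReal.ofReal
      (Real.exp (-α * entropyProduction (P i) (Q i) x)) ∂P i) l (𝓝 E)) (s : ℝ) :
    limsup (logRate r fun i => Q i {x | (r i)⁻¹ * entropyProduction (P i) (Q i) x ∈ Ici s}) l
      ≤ ((-(1 - α) * s : ℝ) : EReal) + E := by
  refine limsup_logRate_le hrpos hE fun i => ?_
  have hset : {x | (r i)⁻¹ * entropyProduction (P i) (Q i) x ∈ Ici s} =
      {x | s * r i ≤ entropyProduction (P i) (Q i) x} := by
    ext x
    show s ≤ _ ↔ s * r i ≤ entropyProduction (P i) (Q i) x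
    rw [le_inv_mul_iff₀ (hrpos i), mul_comm]
  rw [hset, mul_assoc]
  exact measure_setOf_le_entropyProduction_le_exp_mul_lintegral (hPQ i) (hQP i) hα _

theorem nontrivial_setOf_threshold {α u E T : ℝ} (hα : α ∈ Ioc (0 : ℝ) 1)
    (h : -T < α⁻¹ * (-(1 - α) * u - E)) :
    {s : ℝ | α * s + E < -u ∧ -(1 - α) * s + E < T}.Nontrivial := by
  set δ := α * T - (1 - α) * u - E
  have hδ : 0 < δ := by
    have := (mul_lt_mul_iff_right₀ hα.1).2 h
    rw [mul_inv_cancel_left₀ hα.1.ne'] at this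
    linarith
  have hmem : ∀ c, 0 < c → c < δ →
      (-u - E - c) / α ∈ {s : ℝ | α * s + E < -u ∧ -(1 - α) * s + E < T} := by
    intro c hc hcδ
    have hs : α * ((-u - E - c) / α) = -u - E - c := mul_div_cancel₀ _ hα.1.ne'
    refine ⟨by linarith, lt_of_mul_lt_mul_left ?_ hα.1.le⟩
    have : α * (-(1 - α) * ((-u - E - c) / α) + E) =
        -(1 - α) * (α * ((-u - E - c) / α)) + α * E := by ring
    rw [this, hs]
    nlinarith [mul_nonneg hα.1.le hc.le]
  refine ⟨_, hmem (δ / 2) (by linarith) (by linarith),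
    _, hmem (δ / 4) (by linarith) (by linarith), ?_⟩
  rw [Ne, div_left_inj' hα.1.ne']
  linarith

theorem exists_measurableSet_tendsto_logRate_lt [l.NeBot] [∀ i, SigmaFinite (P i)]
    [∀ i, SigmaFinite (Q i)] (hrpos : ∀ i, 0 < r i) (hPQ : ∀ i, P i ≪ Q i)
    (hQP : ∀ i, Q i ≪ P i) {Ihat : ℝ → ℝ≥0∞}
    (hIhat : ConvexOn ℝ {t | Ihat t ≠ ⊤} fun t => (Ihat t).toReal)
    (hLDP : ∀ s : ℝ,
      -(⨅ t ∈ Ioi s, (Ihat t : EReal)) ≤ liminf (logRate r fun i =>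
        Q i {x | (r i)⁻¹ * entropyProduction (P i) (Q i) x ∈ Ici s}) l ∧
      limsup (logRate r fun i => Q i {x | (r i)⁻¹ * entropyProduction (P i) (Q i) x ∈ Ici s}) l
        ≤ -(⨅ t ∈ Ici s, (Ihat t : EReal)))
    {e : ℝ → EReal} (he : ∀ α ∈ Ioc (0 : ℝ) 1, e α ≠ ⊥ ∧ e α ≠ ⊤)
    (helim : ∀ α ∈ Ioc (0 : ℝ) 1, Tendsto (logRate r fun i => ∫⁻ x, ENNReal.ofReal
      (Real.exp (-α * entropyProduction (P i) (Q i) x)) ∂P i) l (𝓝 (e α)))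
    {u : ℝ} {w : EReal} (hw : -hoeffdingRate e u < w) :
    ∃ Γ : ∀ i, Set (Ω i), (∀ i, MeasurableSet (Γ i)) ∧
      limsup (logRate r fun i => P i (Γ i)ᶜ) l < -(u : EReal) ∧
      ∃ a < w, Tendsto (logRate r fun i => Q i (Γ i)) l (𝓝 a) := by
  obtain ⟨T, hfT, hTw⟩ := EReal.exists_between_coe_real hw
  obtain ⟨α, hα, hαT⟩ : ∃ α ∈ Ioc (0 : ℝ) 1,
      ((-T : ℝ) : EReal) < ((α⁻¹ : ℝ) : EReal) * (((-(1 - α) * u : ℝ) : EReal) - e α) := by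
    rw [EReal.neg_lt_comm, ← EReal.coe_neg] at hfT
    simpa only [hoeffdingRate, lt_iSup_iff, exists_prop] using hfT
  obtain ⟨E, hE⟩ : ∃ E : ℝ, e α = E :=
    ⟨(e α).toReal, (EReal.coe_toReal (he α hα).2 (he α hα).1).symm⟩
  rw [hE, ← EReal.coe_sub, ← EReal.coe_mul, EReal.coe_lt_coe_iff] at hαT
  -- Every threshold `s` in this set gives an admissible test with small `Q`-exponent, and the
  -- LDP bounds for `Q` on `[s, ∞)` coincide for all but at most one `s`.
  obtain ⟨s, ⟨hsu, hsT⟩, hgood⟩ := Set.not_subset.1 fun hsub =>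
    (nontrivial_setOf_threshold hα hαT).not_subsingleton
      ((subsingleton_setOf_lt_biInf_Ioi hIhat).anti hsub)
  have hlim := hE ▸ helim α hα
  refine ⟨fun i => {x | (r i)⁻¹ * entropyProduction (P i) (Q i) x ∈ Ici s},
    fun i => ((measurable_entropyProduction _ _).const_mul _) measurableSet_Ici, ?_, ?_⟩
  · calc _ ≤ ((α * s : ℝ) : EReal) + E :=
          limsup_logRate_entropyProduction_lt_le hrpos hα.1.le hlim s
      _ < -(u : EReal) := by rw [← EReal.coe_add, ← EReal.coe_neg]; exact_mod_cast hsu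
  · obtain ⟨hlow, hup⟩ := hLDP s
    rw [← biInf_Ici_eq_biInf_Ioi hgood] at hlow
    refine ⟨_, ?_, tendsto_of_le_liminf_of_limsup_le hlow hup⟩
    calc -(⨅ t ∈ Ici s, (Ihat t : EReal)) ≤ _ := hlow
      _ ≤ _ := liminf_le_limsup
      _ ≤ ((-(1 - α) * s : ℝ) : EReal) + E :=
          limsup_logRate_le_entropyProduction_le hrpos hPQ hQP hα.2 hlim s
      _ < T := by rw [← EReal.coe_add]; exact_mod_cast hsT
      _ < w := hTw

end Tests

theorem sInf_liminf_limsup_lim_eq {β ι : Type*} {l : Filter ι} [l.NeBot] {V W : β → Prop}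
    {g : β → ι → EReal} {m : EReal} (hlow : ∀ b, V b → W b → m ≤ liminf (g b) l)
    (hach : ∀ w, m < w → ∃ b, V b ∧ W b ∧ ∃ a < w, Tendsto (g b) l (𝓝 a)) :
    sInf {a | ∃ b, V b ∧ W b ∧ a = liminf (g b) l} = m ∧
      sInf {a | ∃ b, V b ∧ W b ∧ a = limsup (g b) l} = m ∧
      sInf {a | ∃ b, V b ∧ W b ∧ Tendsto (g b) l (𝓝 a)} = m := by
  refine ⟨?_, ?_, ?_⟩ <;> refine sInf_eq_of_forall_ge_of_forall_gt_exists_lt ?_ fun w hw => ?_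
  · rintro _ ⟨b, hV, hW, rfl⟩
    exact hlow b hV hW
  · obtain ⟨b, hV, hW, a, haw, hb⟩ := hach w hw
    exact ⟨_, ⟨b, hV, hW, rfl⟩, hb.liminf_eq.trans_lt haw⟩
  · rintro _ ⟨b, hV, hW, rfl⟩
    exact (hlow b hV hW).trans liminf_le_limsup
  · obtain ⟨b, hV, hW, a, haw, hb⟩ := hach w hw
    exact ⟨_, ⟨b, hV, hW, rfl⟩, hb.limsup_eq.trans_lt haw⟩
  · rintro a ⟨b, hV, hW, hb⟩
    exact (hlow b hV hW).trans_eq hb.liminf_eq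
  · obtain ⟨b, hV, hW, a, haw, hb⟩ := hach w hw
    exact ⟨a, ⟨b, hV, hW, hb⟩, haw⟩

theorem hoeffding_exponents_general
    {ι : Type*} (l : Filter ι) [l.NeBot]
    (r : ι → ℝ) (hrpos : ∀ i, 0 < r i) (hr : Tendsto r l atTop)
    (Ω : ι → Type*) [∀ i, MeasurableSpace (Ω i)]
    (P Phat : ∀ i, Measure (Ω i))
    (hPprob : ∀ i, IsProbabilityMeasure (P i))
    (hPhatprob : ∀ i, IsProbabilityMeasure (Phat i))
    (hac : ∀ i, P i ≪ Phat i) (hac' : ∀ i, Phat i ≪ P i)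
    (I Ihat : ℝ → ℝ≥0∞)
    (hIconv : ∀ x y p q : ℝ, 0 ≤ p → 0 ≤ q → p + q = 1 →
      I (p * x + q * y) ≤ ENNReal.ofReal p * I x + ENNReal.ofReal q * I y)
    (hIhatconv : ∀ x y p q : ℝ, 0 ≤ p → 0 ≤ q → p + q = 1 →
      Ihat (p * x + q * y) ≤ ENNReal.ofReal p * Ihat x + ENNReal.ofReal q * Ihat y)
    (hLDP : ∀ S : Set ℝ, MeasurableSet S →
      (-(⨅ s ∈ interior S, (I s : EReal))
          ≤ liminf (fun i => ((r i)⁻¹ : EReal) *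
              ENNReal.log (P i {x | (r i)⁻¹ * entropyProduction (P i) (Phat i) x ∈ S})) l)
      ∧ (limsup (fun i => ((r i)⁻¹ : EReal) *
              ENNReal.log (P i {x | (r i)⁻¹ * entropyProduction (P i) (Phat i) x ∈ S})) l
          ≤ -(⨅ s ∈ closure S, (I s : EReal))))
    (hLDPhat : ∀ S : Set ℝ, MeasurableSet S →
      (-(⨅ s ∈ interior S, (Ihat s : EReal))
          ≤ liminf (fun i => ((r i)⁻¹ : EReal) *
              ENNReal.log (Phat i {x | (r i)⁻¹ * entropyProduction (P i) (Phat i) x ∈ S})) l)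
      ∧ (limsup (fun i => ((r i)⁻¹ : EReal) *
              ENNReal.log (Phat i {x | (r i)⁻¹ * entropyProduction (P i) (Phat i) x ∈ S})) l
          ≤ -(⨅ s ∈ closure S, (Ihat s : EReal))))
    (e : ℝ → EReal)
    (he : ∀ α : ℝ, e α = ⨆ s : ℝ, ((α * s : ℝ) : EReal) - (I (-s) : EReal))
    (helim : ∀ α ∈ Set.Icc (0 : ℝ) 1,
      Tendsto (fun i => ((r i)⁻¹ : EReal) *
          ENNReal.log (∫⁻ x, ENNReal.ofReal
            (Real.exp (-α * entropyProduction (P i) (Phat i) x)) ∂(P i))) l (nhds (e α)))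
    (f : ℝ → EReal)
    (hf : ∀ u : ℝ, f u = ⨆ α ∈ Set.Ioc (0 : ℝ) 1,
        ((α⁻¹ : ℝ) : EReal) * (((-(1 - α) * u : ℝ) : EReal) - e α)) :
    ∀ u : ℝ,
      sInf {a : EReal | ∃ Γ : ∀ i, Set (Ω i),
          (∀ i, MeasurableSet (Γ i))
          ∧ limsup (fun i => ((r i)⁻¹ : EReal) * ENNReal.log (P i (Γ i)ᶜ)) l < -(u : EReal)
          ∧ a = liminf (fun i => ((r i)⁻¹ : EReal) * ENNReal.log (Phat i (Γ i))) l}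
        = -(f u)
      ∧ sInf {a : EReal | ∃ Γ : ∀ i, Set (Ω i),
          (∀ i, MeasurableSet (Γ i))
          ∧ limsup (fun i => ((r i)⁻¹ : EReal) * ENNReal.log (P i (Γ i)ᶜ)) l < -(u : EReal)
          ∧ a = limsup (fun i => ((r i)⁻¹ : EReal) * ENNReal.log (Phat i (Γ i))) l}
        = -(f u)
      ∧ sInf {a : EReal | ∃ Γ : ∀ i, Set (Ω i),
          (∀ i, MeasurableSet (Γ i))
          ∧ limsup (fun i => ((r i)⁻¹ : EReal) * ENNReal.log (P i (Γ i)ᶜ)) l < -(u : EReal)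
          ∧ Tendsto (fun i => ((r i)⁻¹ : EReal) * ENNReal.log (Phat i (Γ i))) l (nhds a)}
        = -(f u) := by
  intro u
  obtain rfl : e = entropicPressure I := funext he
  obtain rfl : f = hoeffdingRate (entropicPressure I) := funext hf
  have he1 : entropicPressure I 1 = 0 := by
    refine tendsto_nhds_unique (helim 1 ⟨zero_le_one, le_rfl⟩)
      (tendsto_const_nhds.congr fun i => ?_)
    simp only [neg_mul, one_mul, lintegral_exp_neg_entropyProduction (hac i) (hac' i),
      measure_univ, ENNReal.log_one, mul_zero]
  have hIneg := neg_le_of_entropicPressure_one_nonpos he1.le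
  have hpressure : ∀ α ∈ Ioc (0 : ℝ) 1, entropicPressure I α ≠ ⊥ ∧ entropicPressure I α ≠ ⊤ :=
    fun α hα => ⟨entropicPressure_ne_bot (he1 ▸ EReal.zero_ne_bot) α,
      ((entropicPressure_nonpos hIneg (Ioc_subset_Icc_self hα)).trans_lt EReal.zero_lt_top).ne⟩
  refine sInf_liminf_limsup_lim_eq (fun Γ _ hΓ => ?_) fun w hw => ?_
  · refine neg_hoeffdingRate_le_liminf_logRate hrpos hr hac hac'
      (convexOn_toReal_setOf_ne_top hIconv) hIneg (fun S hS => ?_) hΓ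
    have := (hLDP S hS.measurableSet).1
    rwa [hS.interior_eq] at this
  · refine exists_measurableSet_tendsto_logRate_lt hrpos hac hac'
      (convexOn_toReal_setOf_ne_top hIhatconv) (fun s => ?_) hpressure
      (fun α hα => helim α (Ioc_subset_Icc_self hα)) hw
    have := hLDPhat (Ici s) measurableSet_Ici
    rwa [interior_Ici, closure_Ici] at this

/-- **Hoeffding error exponents.**
Assume the laws of `r_λ⁻¹σ_λ` under `P_λ` and under `P̂_λ` satisfy the full LDP with
scale `r_λ` and convex, lower semicontinuous rates `I`, `Î`, and that the entropic
pressure `e(α) = sup_s (αs − I(−s))` equals `lim r_λ⁻¹ log ∫ e^{−ασ_λ} dP_λ` for every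
`α ∈ [0,1]`.  Then for every `u ∈ ℝ` the three Hoeffding exponents `𝔥̲(u)`, `𝔥̄(u)`,
`𝔥(u)` (infima of `liminf`/`limsup`/`lim` of `r_λ⁻¹ log P̂_λ(Γ_λ)` over families with
`limsup r_λ⁻¹ log P_λ(Γ_λᶜ) < −u`) coincide and equal `−f(u)`, where
`f(u) = sup_{α∈(0,1]} α⁻¹(−(1−α)u − e(α))`. -/
theorem hoeffding_exponents
    {ι : Type*} (l : Filter ι) [l.NeBot]
    (r : ι → ℝ) (hrpos : ∀ i, 0 < r i) (hr : Tendsto r l atTop)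
    (Ω : ι → Type*) [∀ i, MeasurableSpace (Ω i)]
    (P Phat : ∀ i, Measure (Ω i))
    (hPprob : ∀ i, IsProbabilityMeasure (P i))
    (hPhatprob : ∀ i, IsProbabilityMeasure (Phat i))
    (hac : ∀ i, P i ≪ Phat i) (hac' : ∀ i, Phat i ≪ P i)
    (I Ihat : ℝ → ℝ≥0∞)
    (hIconv : ∀ x y p q : ℝ, 0 ≤ p → 0 ≤ q → p + q = 1 →
      I (p * x + q * y) ≤ ENNReal.ofReal p * I x + ENNReal.ofReal q * I y)
    (hIhatconv : ∀ x y p q : ℝ, 0 ≤ p → 0 ≤ q → p + q = 1 →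
      Ihat (p * x + q * y) ≤ ENNReal.ofReal p * Ihat x + ENNReal.ofReal q * Ihat y)
    (hIlsc : LowerSemicontinuous I) (hIhatlsc : LowerSemicontinuous Ihat)
    (hLDP : ∀ S : Set ℝ, MeasurableSet S →
      (-(⨅ s ∈ interior S, (I s : EReal))
          ≤ liminf (fun i => ((r i)⁻¹ : EReal) *
              ENNReal.log (P i {x | (r i)⁻¹ * entropyProduction (P i) (Phat i) x ∈ S})) l)
      ∧ (limsup (fun i => ((r i)⁻¹ : EReal) *
              ENNReal.log (P i {x | (r i)⁻¹ * entropyProduction (P i) (Phat i) x ∈ S})) l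
          ≤ -(⨅ s ∈ closure S, (I s : EReal))))
    (hLDPhat : ∀ S : Set ℝ, MeasurableSet S →
      (-(⨅ s ∈ interior S, (Ihat s : EReal))
          ≤ liminf (fun i => ((r i)⁻¹ : EReal) *
              ENNReal.log (Phat i {x | (r i)⁻¹ * entropyProduction (P i) (Phat i) x ∈ S})) l)
      ∧ (limsup (fun i => ((r i)⁻¹ : EReal) *
              ENNReal.log (Phat i {x | (r i)⁻¹ * entropyProduction (P i) (Phat i) x ∈ S})) l
          ≤ -(⨅ s ∈ closure S, (Ihat s : EReal))))
    (e : ℝ → EReal)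
    (he : ∀ α : ℝ, e α = ⨆ s : ℝ, ((α * s : ℝ) : EReal) - (I (-s) : EReal))
    (helim : ∀ α ∈ Set.Icc (0 : ℝ) 1,
      Tendsto (fun i => ((r i)⁻¹ : EReal) *
          ENNReal.log (∫⁻ x, ENNReal.ofReal
            (Real.exp (-α * entropyProduction (P i) (Phat i) x)) ∂(P i))) l (nhds (e α)))
    (f : ℝ → EReal)
    (hf : ∀ u : ℝ, f u = ⨆ α ∈ Set.Ioc (0 : ℝ) 1,
        ((α⁻¹ : ℝ) : EReal) * (((-(1 - α) * u : ℝ) : EReal) - e α)) :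
    ∀ u : ℝ,
      sInf {a : EReal | ∃ Γ : ∀ i, Set (Ω i),
          (∀ i, MeasurableSet (Γ i))
          ∧ limsup (fun i => ((r i)⁻¹ : EReal) * ENNReal.log (P i (Γ i)ᶜ)) l < -(u : EReal)
          ∧ a = liminf (fun i => ((r i)⁻¹ : EReal) * ENNReal.log (Phat i (Γ i))) l}
        = -(f u)
      ∧ sInf {a : EReal | ∃ Γ : ∀ i, Set (Ω i),
          (∀ i, MeasurableSet (Γ i))
          ∧ limsup (fun i => ((r i)⁻¹ : EReal) * ENNReal.log (P i (Γ i)ᶜ)) l < -(u : EReal)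
          ∧ a = limsup (fun i => ((r i)⁻¹ : EReal) * ENNReal.log (Phat i (Γ i))) l}
        = -(f u)
      ∧ sInf {a : EReal | ∃ Γ : ∀ i, Set (Ω i),
          (∀ i, MeasurableSet (Γ i))
          ∧ limsup (fun i => ((r i)⁻¹ : EReal) * ENNReal.log (P i (Γ i)ᶜ)) l < -(u : EReal)
          ∧ Tendsto (fun i => ((r i)⁻¹ : EReal) * ENNReal.log (Phat i (Γ i))) l (nhds a)}
        = -(f u) :=
  hoeffding_exponents_general l r hrpos hr Ω P Phat hPprob hPhatprob hac hac' I Ihat hIconv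
    hIhatconv hLDP hLDPhat e he helim f hf
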